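/- Failure of commutation of minimal reduction with minimal substitution: let Γ = {A⇒A, B⇒A, B}, t = ((λ_A ⟨A⟩) (⟨A⇒A⟩ ⟨A⟩)), u = ⟨A⟩, v = (⟨B⇒A⟩ ⟨B⟩). Then t in context Γ ∪ {A} reduces (by one minimal top-level step) to u in context Γ ∪ {A}, but min-[v/A]_Γ t = ((λ_A ⟨A⟩) (⟨A⇒A⟩ (⟨B⇒A⟩ ⟨B⟩))) reduces to (⟨A⇒A⟩ (⟨B⇒A⟩ ⟨B⟩)), which is different from min-[v/A]_Γ u = (⟨B⇒A⟩ ⟨B⟩). -/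

import Mathlib

/-! Simply-typed scheme-calculus. -/

inductive STy : Type
  | atom : ℕ → STy
  | arr : STy → STy → STy
deriving DecidableEq

inductive Schm : Type
  | var : STy → Schm
  | lam : STy → Schm → Schm
  | app : Schm → Schm → Schm
deriving DecidableEq

/-- Typing rules of the simply-typed scheme-calculus (contexts are finite sets). -/
inductive Typed : Finset STy → Schm → STy → Prop
  | var {Γ A} : A ∈ Γ → Typed Γ (.var A) A
  | lam {Γ A B t} : Typed (insert A Γ) t B → Typed Γ (.lam A t) (.arr A B)
  | app {Γ A B t u} : Typed Γ t (.arr A B) → Typed Γ u A → Typed Γ (.app t u) B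

/-- `SSubst u A Γ t v` means `v ∈ [u/A]_Γ t` (non-deterministic substitution). -/
inductive SSubst (u : Schm) (A : STy) : Finset STy → Schm → Schm → Prop
  | varKeep {Γ} : A ∈ Γ → SSubst u A Γ (.var A) (.var A)
  | varSub {Γ} : SSubst u A Γ (.var A) u
  | varOther {Γ B} : B ≠ A → SSubst u A Γ (.var B) (.var B)
  | lam {Γ C t t'} : SSubst u A (insert C Γ) t t' → SSubst u A Γ (.lam C t) (.lam C t')
  | app {Γ t t' s s'} : SSubst u A Γ t t' → SSubst u A Γ s s' →
      SSubst u A Γ (.app t s) (.app t' s')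

/-- One-step β-reduction of schemes in context. -/
inductive Red : Finset STy → Schm → Schm → Prop
  | beta {Γ A t u v} : SSubst u A Γ t v → Red Γ (.app (.lam A t) u) v
  | appL {Γ t t' u} : Red Γ t t' → Red Γ (.app t u) (.app t' u)
  | appR {Γ t u u'} : Red Γ u u' → Red Γ (.app t u) (.app t u')
  | lam {Γ A t t'} : Red (insert A Γ) t t' → Red Γ (.lam A t) (.lam A t')

/-- Multi-step β-reduction. -/
def RedStar (Γ : Finset STy) : Schm → Schm → Prop := Relation.ReflTransGen (Red Γ)

/-- Minimal (deterministic) substitution: `⟨A⟩` is replaced exactly when `A ∉ Γ`. -/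
def minSubst (u : Schm) (A : STy) : Finset STy → Schm → Schm
  | Γ, .var B => if B = A ∧ A ∉ Γ then u else .var B
  | Γ, .lam C t => .lam C (minSubst u A (insert C Γ) t)
  | Γ, .app t s => .app (minSubst u A Γ t) (minSubst u A Γ s)

namespace Schm

theorem app_ne_right (s t : Schm) : app s t ≠ t := fun h => by
  have := congrArg sizeOf h
  simp only [app.sizeOf_spec] at this
  omega

end Schm

section minSubst

variable (u : Schm) (A : STy)

theorem minSubst_var_self_of_notMem {Γ : Finset STy} (h : A ∉ Γ) :
    minSubst u A Γ (.var A) = u := by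
  simp [minSubst, h]

theorem minSubst_var_of_ne {B : STy} (Γ : Finset STy) (h : B ≠ A) :
    minSubst u A Γ (.var B) = .var B := by
  simp [minSubst, h]

theorem minSubst_of_mem (t : Schm) {Γ : Finset STy} (h : A ∈ Γ) : minSubst u A Γ t = t := by
  induction t generalizing Γ with
  | var B => by_cases hB : B = A <;> simp [minSubst, hB, h]
  | lam C t ih => rw [minSubst, ih (Finset.mem_insert_of_mem h)]
  | app t s iht ihs => rw [minSubst, iht h, ihs h]

theorem minSubst_lam_self (t : Schm) (Γ : Finset STy) :
    minSubst u A Γ (.lam A t) = .lam A t := by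
  rw [minSubst, minSubst_of_mem u A t (Finset.mem_insert_self A Γ)]

end minSubst

/-- failure of commutation of minimal reduction with minimal substitution.
With `Γ = {A⇒A, B⇒A, B}`, `t = ((λ_A ⟨A⟩) (⟨A⇒A⟩ ⟨A⟩))`, `u = ⟨A⟩`,
`v = (⟨B⇒A⟩ ⟨B⟩)`: `t` top-level-reduces in `Γ ∪ {A}` to `u`; but
`min-[v/A]_Γ t = ((λ_A ⟨A⟩) (⟨A⇒A⟩ (⟨B⇒A⟩ ⟨B⟩)))`, whose top-level minimal reduct is
`(⟨A⇒A⟩ (⟨B⇒A⟩ ⟨B⟩))`, which differs from `min-[v/A]_Γ u = (⟨B⇒A⟩ ⟨B⟩)`. -/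
theorem min_reduction_substitution_no_commute (p q : ℕ) (hpq : p ≠ q) :
    let A := STy.atom p
    let B := STy.atom q
    let Γ : Finset STy := {A.arr A, B.arr A, B}
    let t := Schm.app (.lam A (.var A)) (.app (.var (A.arr A)) (.var A))
    let u := Schm.var A
    let v := Schm.app (.var (B.arr A)) (.var B)
    -- the top-level minimal reduct of `t` in `Γ ∪ {A}` is `u`
    minSubst (Schm.app (.var (A.arr A)) (.var A)) A (insert A Γ) (.var A) = u ∧
    -- `min-[v/A]_Γ t`
    minSubst v A Γ t =
      Schm.app (.lam A (.var A)) (.app (.var (A.arr A)) v) ∧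
    -- the top-level minimal reduct of `min-[v/A]_Γ t` in `Γ`
    minSubst (Schm.app (.var (A.arr A)) v) A Γ (.var A) =
      Schm.app (.var (A.arr A)) v ∧
    -- `min-[v/A]_Γ u`
    minSubst v A Γ u = v ∧
    Schm.app (.var (A.arr A)) v ≠ v := by
  intro A B Γ t u v
  have hA : A ∉ Γ := by simp [Γ, A, B, hpq]
  have hAA : A.arr A ≠ A := by simp [A]
  refine ⟨minSubst_of_mem _ A _ (Finset.mem_insert_self A Γ), ?_, minSubst_var_self_of_notMem _ A hA,
    minSubst_var_self_of_notMem _ A hA, Schm.app_ne_right _ _⟩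
  simp only [t, minSubst.eq_3, minSubst_lam_self, minSubst_var_of_ne _ A Γ hAA,
    minSubst_var_self_of_notMem _ A hA]
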